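/- Let S be a compact set, T ⊆ S, and V continuous on S with: V < 0 on the initial set I ⊆ S, V > 0 outside int(S), and along the flow V(x(t)) is strictly decreasing (dV/dt ≤ -ε for some ε related to compactness of S \ int(T)) whenever x(t) ∈ S \ int(T). Then a trajectory starting in I cannot remain in S \ int(T) for all time: since V is bounded below on the compact set S \ int(T), the trajectory must eventually enter int(T), and it cannot leave S before doing so (since V < 0 along the trajectory but V > 0 outside int(S)). -/

import Mathlib

open Set Topology

/-!
While the trajectory stays in the compact set `S \ int T`, `V` decreases at rate at least `ε`
and is bounded below, so the trajectory must leave `S \ int T` at some first exit time `τ`.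
Up to `τ` it lies in `S \ int T`, hence `V (x τ) ≤ V (x 0) < 0`, so `x τ ∈ int S`. Just after `τ`
the trajectory is still in `int S` but arbitrarily close to `τ` it is outside `S \ int T`,
so it is in `int T` there.
-/

theorem sub_le_mul_sub_of_hasDerivAt_le {f : ℝ → ℝ} {a b C : ℝ} (hab : a ≤ b)
    (hf : ContinuousOn f (Icc a b)) (hf' : ∀ t ∈ Ioo a b, ∃ d ≤ C, HasDerivAt f d t) :
    f b - f a ≤ C * (b - a) := by
  choose! f' hf'C hf'f using hf'
  refine (convex_Icc a b).image_sub_le_mul_sub_of_deriv_le hf (fun t ht => ?_) (fun t ht => ?_)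
    a (left_mem_Icc.2 hab) b (right_mem_Icc.2 hab) hab
  all_goals rw [interior_Icc] at ht
  · exact (hf'f t ht).differentiableAt.differentiableWithinAt
  · exact (hf'f t ht).deriv ▸ hf'C t ht

theorem not_bddBelow_image_Ici_of_hasDerivAt_le_neg {f : ℝ → ℝ} {a ε : ℝ} (hε : 0 < ε)
    (hf : ContinuousOn f (Ici a)) (hf' : ∀ t ∈ Ioi a, ∃ d ≤ -ε, HasDerivAt f d t) :
    ¬ BddBelow (f '' Ici a) := by
  rintro ⟨m, hm⟩
  set t := a + (f a - m + 1) / ε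
  have hma : m ≤ f a := hm ⟨a, self_mem_Ici, rfl⟩
  have hat : a ≤ t := le_add_of_nonneg_right (div_nonneg (by linarith) hε.le)
  have hdecay := sub_le_mul_sub_of_hasDerivAt_le hat (hf.mono Icc_subset_Ici_self)
    fun s hs => hf' s hs.1
  have hmt : m ≤ f t := hm ⟨t, hat, rfl⟩
  have hdrop : -ε * (t - a) = -(f a - m + 1) := by
    simp only [t, add_sub_cancel_left]; field_simp
  linarith

theorem exists_first_exit {X : Type*} [TopologicalSpace X] {C : Set X} (hC : IsClosed C)
    {x : ℝ → X} (hx : Continuous x) {a : ℝ} (ha : x a ∈ C) (hexit : ∃ t, a ≤ t ∧ x t ∉ C) :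
    ∃ τ, a ≤ τ ∧ Icc a τ ⊆ x ⁻¹' C ∧ ∀ u > τ, ∃ t ∈ Ioo τ u, x t ∉ C := by
  set E := {t | a ≤ t ∧ x t ∉ C}
  have hEbdd : BddBelow E := ⟨a, fun _ ht => ht.1⟩
  set τ := sInf E
  have haτ : a ≤ τ := le_csInf hexit fun _ ht => ht.1
  have hbefore : Ico a τ ⊆ x ⁻¹' C := fun t ht => by
    by_contra hxt
    exact (csInf_le hEbdd ⟨ht.1, hxt⟩).not_gt ht.2
  have hupto : Icc a τ ⊆ x ⁻¹' C := by
    rcases haτ.eq_or_lt with h | h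
    · simpa [← h] using ha
    · rw [← closure_Ico h.ne]
      exact (hC.preimage hx).closure_subset_iff.2 hbefore
  refine ⟨τ, haτ, hupto, fun u hτu => ?_⟩
  obtain ⟨t, ⟨hat, hxt⟩, htu⟩ := exists_lt_of_csInf_lt hexit hτu
  have hτt : τ < t := (csInf_le hEbdd ⟨hat, hxt⟩).lt_of_ne
    fun h => hxt (h ▸ hupto (right_mem_Icc.2 haτ))
  exact ⟨t, ⟨hτt, htu⟩, hxt⟩

theorem reach_while_stay_general (n : ℕ)
    (S I Ttarget : Set (EuclideanSpace ℝ (Fin n)))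
    (hScompact : IsCompact S) (hIS : I ⊆ S)
    (V : EuclideanSpace ℝ (Fin n) → ℝ) (hVcont : Continuous V)
    (hVI : ∀ y ∈ I, V y < 0)
    (hVout : ∀ y, y ∉ interior S → 0 < V y)
    (ε : ℝ) (hε : 0 < ε)
    (x : ℝ → EuclideanSpace ℝ (Fin n)) (hxcont : Continuous x)
    (hx0 : x 0 ∈ I)
    (hdec : ∀ t : ℝ, 0 ≤ t → x t ∈ S \ interior Ttarget →
      ∃ d : ℝ, d ≤ -ε ∧ HasDerivAt (fun s => V (x s)) d t) :
    ∃ t : ℝ, 0 ≤ t ∧ x t ∈ interior Ttarget ∧ ∀ s ∈ Icc (0 : ℝ) t, x s ∈ S := by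
  by_cases hstart : x 0 ∈ interior Ttarget
  · exact ⟨0, le_rfl, hstart, fun s hs => by rw [hs.2.antisymm hs.1]; exact hIS hx0⟩
  have hVx : Continuous fun s => V (x s) := hVcont.comp hxcont
  have hexit : ∃ t, 0 ≤ t ∧ x t ∉ S \ interior Ttarget := by
    by_contra! hstay
    refine not_bddBelow_image_Ici_of_hasDerivAt_le_neg hε hVx.continuousOn
      (fun t ht => hdec t (le_of_lt ht) (hstay t (le_of_lt ht))) ?_
    refine (hScompact.bddBelow_image hVcont.continuousOn).mono ?_
    rintro _ ⟨t, ht, rfl⟩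
    exact ⟨x t, (hstay t ht).1, rfl⟩
  obtain ⟨τ, hτ0, hupto, hafter⟩ := exists_first_exit (hScompact.isClosed.sdiff isOpen_interior)
    hxcont ⟨hIS hx0, hstart⟩ hexit
  have hVτ : V (x τ) < 0 := by
    have hdecay := sub_le_mul_sub_of_hasDerivAt_le hτ0 hVx.continuousOn
      fun t ht => hdec t ht.1.le (hupto (Ioo_subset_Icc_self ht))
    nlinarith [hVI _ hx0]
  have hnear : x ⁻¹' interior S ∈ 𝓝 τ := hxcont.continuousAt.preimage_mem_nhds <|
    isOpen_interior.mem_nhds (not_not.1 fun h => (hVout _ h).not_gt hVτ)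
  obtain ⟨u, hτu, hIcoS⟩ := exists_Ico_subset_of_mem_nhds hnear ⟨τ + 1, by linarith⟩
  obtain ⟨t, ⟨hτt, htu⟩, hxt⟩ := hafter u hτu
  have hxtS : x t ∈ S := interior_subset (hIcoS ⟨hτt.le, htu⟩)
  refine ⟨t, hτ0.trans hτt.le, not_not.1 fun h => hxt ⟨hxtS, h⟩, fun s hs => ?_⟩
  rcases le_or_gt s τ with hsτ | hτs
  · exact (hupto ⟨hs.1, hsτ⟩).1
  · exact interior_subset (hIcoS ⟨hτs.le, hs.2.trans_lt htu⟩)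

/-- Reach-while-stay certificate: `V < 0` on the initial set `I`, `V > 0` outside
`int S`, and `V` strictly decreases (with rate at least `ε`) along the trajectory while
it is in `S \ int T`. Then a trajectory starting in `I` must eventually enter `int T`,
staying in `S` until it does so. -/
theorem reach_while_stay (n : ℕ)
    (S I Ttarget : Set (EuclideanSpace ℝ (Fin n)))
    (hScompact : IsCompact S) (hIS : I ⊆ S) (hTS : Ttarget ⊆ S)
    (V : EuclideanSpace ℝ (Fin n) → ℝ) (hVcont : Continuous V)
    (hVI : ∀ y ∈ I, V y < 0)
    (hVout : ∀ y, y ∉ interior S → 0 < V y)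
    (ε : ℝ) (hε : 0 < ε)
    (x : ℝ → EuclideanSpace ℝ (Fin n)) (hxcont : Continuous x)
    (hx0 : x 0 ∈ I)
    (hdec : ∀ t : ℝ, 0 ≤ t → x t ∈ S \ interior Ttarget →
      ∃ d : ℝ, d ≤ -ε ∧ HasDerivAt (fun s => V (x s)) d t) :
    ∃ t : ℝ, 0 ≤ t ∧ x t ∈ interior Ttarget ∧ ∀ s ∈ Icc (0 : ℝ) t, x s ∈ S :=
  reach_while_stay_general n S I Ttarget hScompact hIS V hVcont hVI hVout ε hε x hxcont hx0 hdec
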